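/- arXiv:2210.06621 — 6 statements merged into one kernel-verified Lean document; each statement's English description precedes it below -/
import Mathlib

section
/- For integers K ≥ 2 and t with 1 ≤ t ≤ K/2, define D_i = ((K - i)! / (t - i)!) · (K - t - i) for i ∈ {1, ..., t}. Then the sequence D_1, D_2, ..., D_t is strictly decreasing, i.e., D_{i-1} > D_i for all 2 ≤ i ≤ t. -/
/-- D_i = ((K-i)! / (t-i)!) * (K - t - i) -/
def Dseq (K t i : ℕ) : ℕ := (K - i).factorial / (t - i).factorial * (K - t - i)

lemma Dseq_key (a b c : ℕ) (hab : a < b) :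
    (b + 1).factorial / (a + 1).factorial * (c + 1) > b.factorial / a.factorial * c := by
  have hd : a.factorial ∣ b.factorial := Nat.factorial_dvd_factorial hab.le
  have hd2 : (a + 1).factorial ∣ (b + 1).factorial :=
    Nat.factorial_dvd_factorial (by omega)
  set Q := b.factorial / a.factorial with hQdef
  set P := (b + 1).factorial / (a + 1).factorial with hPdef
  have hQ : Q * a.factorial = b.factorial := Nat.div_mul_cancel hd
  have hP : P * (a + 1).factorial = (b + 1).factorial := Nat.div_mul_cancel hd2
  have key : P * (a + 1) = (b + 1) * Q := by
    have h1 : P * (a + 1) * a.factorial = (b + 1) * Q * a.factorial := by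
      calc P * (a + 1) * a.factorial = P * (a + 1).factorial := by
            rw [Nat.factorial_succ]; ring
        _ = (b + 1).factorial := hP
        _ = (b + 1) * b.factorial := Nat.factorial_succ b
        _ = (b + 1) * Q * a.factorial := by rw [← hQ]; ring
    exact Nat.eq_of_mul_eq_mul_right (Nat.factorial_pos a) h1
  have hQpos : 1 ≤ Q := by
    rw [hQdef, Nat.le_div_iff_mul_le (Nat.factorial_pos a), one_mul]
    exact Nat.factorial_le hab.le
  have : Q * c * (a + 1) < P * (c + 1) * (a + 1) := by
    have : P * (c + 1) * (a + 1) = (b + 1) * Q * (c + 1) := by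
      rw [show P * (c + 1) * (a + 1) = P * (a + 1) * (c + 1) by ring, key]
    rw [this]
    calc Q * c * (a + 1) < Q * c * (a + 1) + Q * (a + c + 2) :=
          Nat.lt_add_of_pos_right (by positivity)
      _ = (a + 2) * Q * (c + 1) := by ring
      _ ≤ (b + 1) * Q * (c + 1) := by
          have : a + 2 ≤ b + 1 := by omega
          exact Nat.mul_le_mul_right _ (Nat.mul_le_mul_right _ this)
  exact Nat.lt_of_mul_lt_mul_right this

theorem Dseq_strict_decreasing (K t : ℕ) (hK : 2 ≤ K) (ht1 : 1 ≤ t) (ht : 2 * t ≤ K) :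
    ∀ i : ℕ, 2 ≤ i → i ≤ t → Dseq K t (i - 1) > Dseq K t i := by
  intro i hi2 hit
  have h1 : K - (i - 1) = (K - i) + 1 := by omega
  have h2 : t - (i - 1) = (t - i) + 1 := by omega
  have h3 : K - t - (i - 1) = (K - t - i) + 1 := by omega
  have hab : t - i < K - i := by omega
  unfold Dseq
  rw [h1, h2, h3]
  exact Dseq_key (t - i) (K - i) (K - t - i) hab
end

section
/- For integers K ≥ 2 and t with 1 ≤ t ≤ K/2, the sequence D_i = ((K - i)! / (t - i)!) · (K - t - i), i ∈ {1, ..., t}, is convex: for all 2 ≤ i ≤ t-1, D_{i+1} + D_{i-1} ≥ 2·D_i. -/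
theorem Dseq_convex (K t : ℕ) (hK : 2 ≤ K) (ht1 : 1 ≤ t) (ht : 2 * t ≤ K) :
    ∀ i : ℕ, 2 ≤ i → i ≤ t - 1 → Dseq K t (i + 1) + Dseq K t (i - 1) ≥ 2 * Dseq K t i := by
  intro i hi2 hit
  have ht3 : 3 ≤ t := by omega
  have key : ∀ j, j ≤ t → Dseq K t j = (K - j).descFactorial (K - t) * (K - t - j) := by
    intro j hj
    unfold Dseq
    have e : t - j = (K - j) - (K - t) := by omega
    rw [e, ← Nat.descFactorial_eq_div (by omega)]
  rw [key (i+1) (by omega), key (i-1) (by omega), key i (by omega)]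
  set n := K - i - 1 with hn
  set k := K - t - 1 with hk
  have e1 : K - (i+1) = n := by omega
  have e2 : K - i = n + 1 := by omega
  have e3 : K - (i-1) = n + 2 := by omega
  have e4 : K - t = k + 1 := by omega
  have e5 : k + 1 - (i+1) = k - i := by omega
  have e7 : k + 1 - (i-1) = k + 2 - i := by omega
  rw [e1, e2, e3, e4, e5, e7]
  rw [Nat.succ_descFactorial_succ, Nat.succ_descFactorial_succ,
    Nat.descFactorial_succ]
  set Q := n.descFactorial k with hQ
  set R := (n+1).descFactorial k with hR
  have hnk : k + 1 ≤ n := by omega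
  have hQR : (n + 1 - k) * R = (n + 1) * Q := by
    have h1 : (n+1).descFactorial (k+1) = (n + 1 - k) * R := Nat.descFactorial_succ _ _
    have h2 : (n+1).descFactorial (k+1) = (n + 1) * Q := Nat.succ_descFactorial_succ _ _
    omega
  have hik : i ≤ k := by omega
  rw [ge_iff_le]
  have hpos : 0 < n + 1 - k := by omega
  apply Nat.le_of_mul_le_mul_left _ hpos
  clear_value Q R n k
  obtain ⟨u, hu⟩ : ∃ u, n = k + 1 + u := ⟨n - k - 1, by omega⟩
  obtain ⟨j, hj⟩ : ∃ j, k = i + j := ⟨k - i, by omega⟩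
  subst hu hj
  have s0 : i + j + 1 + u - (i + j) = u + 1 := by omega
  have s1 : i + j + 1 + u + 1 - (i + j) = u + 2 := by omega
  have s2 : i + j - i = j := by omega
  have s3 : i + j + 1 - i = j + 1 := by omega
  have s4 : i + j + 2 - i = j + 2 := by omega
  rw [s1] at hQR ⊢
  rw [s0, s2, s3, s4]
  have coeff : (u + 2) * 2 * (i + j + 1 + u + 1) * (j + 1) ≤
      (u + 2) * (u + 1) * j + (i + j + 1 + u + 1 + 1) * (j + 2) * (i + j + 1 + u + 1) := by
    have hid : (u + 2) * (u + 1) * j + (i + j + 1 + u + 1 + 1) * (j + 2) * (i + j + 1 + u + 1) =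
        (u + 2) * 2 * (i + j + 1 + u + 1) * (j + 1) +
          (j * (i + j + 1) * (i + j) + 2 * (i + j + 1 + u + 1) * (i + j + 1)) := by ring
    rw [hid]
    exact Nat.le_add_right _ _
  calc (u + 2) * (2 * ((i + j + 1 + u + 1) * Q * (j + 1)))
      = ((u + 2) * 2 * (i + j + 1 + u + 1) * (j + 1)) * Q := by ring
    _ ≤ ((u + 2) * (u + 1) * j + (i + j + 1 + u + 1 + 1) * (j + 2) * (i + j + 1 + u + 1)) * Q :=
        Nat.mul_le_mul_right Q coeff
    _ = (u + 2) * ((u + 1) * Q * j) + (i + j + 1 + u + 1 + 1) * (j + 2) * ((i + j + 1 + u + 1) * Q) := by ring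
    _ = (u + 2) * ((u + 1) * Q * j) + (i + j + 1 + u + 1 + 1) * (j + 2) * ((u + 2) * R) := by rw [hQR]
    _ = (u + 2) * ((u + 1) * Q * j + (i + j + 1 + u + 1 + 1) * R * (j + 2)) := by ring
end

section
/- Let μ ≥ 1 and n_1, ..., n_{K̃} be positive integers with C = n_1 + ... + n_{K̃} ≤ μ. For each i ∈ [K̃] and k ∈ [n_i], let B_{i,k} ∈ ℂ^{μ×μ} be a deterministic diagonal matrix, and assume that for each i, every square submatrix of the μ × n_i matrix B_i = [B_{i,1}·1_μ, ..., B_{i,n_i}·1_μ] is invertible. Let Ξ_1, ..., Ξ_{K̃} be independent random μ-vectors with entries drawn i.i.d. from continuous distributions. Then the μ × C matrix Λ = [A_1, ..., A_{K̃}] with A_i = [B_{i,1}Ξ_i, ..., B_{i,n_i}Ξ_i] has full column rank C almost surely. -/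
/-!
Replace the entries of the `Ξ_i` by indeterminates. For an injective choice `r` of `C` rows, the
`C × C` minor of `Λ` on the rows `r` becomes a polynomial; evaluated at the indicator of the
positions `(i, r (i, k))` it is block diagonal with square submatrices of the `B_i` as blocks,
so this polynomial is nonzero. Because the `Ξ_i` are independent and each avoids the zero sets of
nonzero polynomials, so does the concatenated vector (Fubini, one block at a time); hence the
minor is almost surely nonzero and `Λ` has full column rank.
-/

open MeasureTheory ProbabilityTheory

namespace Matrix

theorem det_blockDiagonal' {o R : Type*} {m : o → Type*} [Fintype o] [DecidableEq o]
    [∀ i, Fintype (m i)] [∀ i, DecidableEq (m i)] [CommRing R]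
    (M : ∀ i, Matrix (m i) (m i) R) :
    (blockDiagonal' M).det = ∏ i, (M i).det := by
  let _ : LinearOrder o := LinearOrder.lift' _ (Fintype.equivFin o).injective
  rw [(blockTriangular_blockDiagonal' M).det_fintype]
  refine Finset.prod_congr rfl fun i _ => ?_
  rw [← det_submatrix_equiv_self (Equiv.sigmaSubtype i).symm]
  congr 1
  ext x y
  simp [toSquareBlock_def, Equiv.sigmaSubtype]

theorem rank_eq_card_of_det_submatrix_ne_zero {m n R : Type*} [Fintype n] [DecidableEq n]
    [CommRing R] [IsDomain R] {A : Matrix m n R} (r : n → m) (h : (A.submatrix r id).det ≠ 0) :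
    A.rank = Fintype.card n :=
  le_antisymm A.rank_le_card_width
    ((rank_of_det_ne_zero h).symm.le.trans (rank_submatrix_le A r id))

end Matrix

namespace MvPolynomial

variable {R m κ : Type*} [CommRing R] {β : κ → Type*}

theorem eval_sumElim {σ τ : Type*} (a : σ → R) (b : τ → R) (p : MvPolynomial (σ ⊕ τ) R) :
    eval (Sum.elim a b) p = eval a (map (eval b) (sumRingEquiv R σ τ p)) := by
  induction p using MvPolynomial.induction_on with
  | C c => simp
  | add p q hp hq => simp [hp, hq]
  | mul_X p v hp => cases v <;> simp [hp]

/-- `Λ` with the entry `Ξ_i x` replaced by the indeterminate `X (i, x)`; `b ⟨i, k⟩ x` stands for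
the diagonal entry `B_{i,k} x x`. -/
noncomputable def genericBlockMatrix (b : (Σ i, β i) → m → R) :
    Matrix m (Σ i, β i) (MvPolynomial (κ × m) R) :=
  Matrix.of fun x q => C (b q x) * X (q.1, x)

theorem genericBlockMatrix_map_eval (b : (Σ i, β i) → m → R) (ξ : κ × m → R) :
    (genericBlockMatrix b).map (eval ξ) = Matrix.of fun x q => b q x * ξ (q.1, x) := by
  ext
  simp [genericBlockMatrix]

theorem det_genericBlockMatrix_submatrix_ne_zero [IsDomain R] [Fintype κ] [DecidableEq κ]
    [∀ i, Fintype (β i)] [∀ i, DecidableEq (β i)]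
    (b : (Σ i, β i) → m → R) (r : (Σ i, β i) ↪ m)
    (hb : ∀ i, (Matrix.of fun x y : β i => b ⟨i, y⟩ (r ⟨i, x⟩)).det ≠ 0) :
    ((genericBlockMatrix b).submatrix r id).det ≠ 0 := by
  classical
  let ξ : κ × m → R := fun v => if ∃ x, r ⟨v.1, x⟩ = v.2 then 1 else 0
  have hblock : ((genericBlockMatrix b).submatrix r id).map (eval ξ) =
      Matrix.blockDiagonal' fun i => Matrix.of fun x y : β i => b ⟨i, y⟩ (r ⟨i, x⟩) := by
    ext ⟨i, x⟩ ⟨j, y⟩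
    by_cases hij : i = j
    · subst hij
      simp [genericBlockMatrix, ξ]
    · have : ξ (j, r ⟨i, x⟩) = 0 :=
        if_neg fun ⟨x', h⟩ => hij (congrArg Sigma.fst (r.injective h)).symm
      simp [genericBlockMatrix, this, Matrix.blockDiagonal'_apply_ne _ _ _ hij]
  intro h
  have := congrArg (eval ξ) h
  rw [RingHom.map_det, RingHom.mapMatrix_apply, hblock, Matrix.det_blockDiagonal', map_zero]
    at this
  exact Finset.prod_ne_zero_iff.mpr (fun i _ => hb i) this

end MvPolynomial

section PolynomialGenericity

variable {Ω 𝕜 σ τ : Type*} [MeasurableSpace Ω] {μ : Measure Ω} [RCLike 𝕜]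

def AvoidsPolynomialZeroSets (X : Ω → σ → 𝕜) (μ : Measure Ω) : Prop :=
  ∀ p : MvPolynomial σ 𝕜, p ≠ 0 → μ {ω | MvPolynomial.eval (X ω) p = 0} = 0

theorem MvPolynomial.measurableSet_eval_eq_zero [Fintype σ] (p : MvPolynomial σ 𝕜) :
    MeasurableSet {x : σ → 𝕜 | eval x p = 0} :=
  (continuous_eval p).measurable (measurableSet_singleton 0)

theorem AvoidsPolynomialZeroSets.comp_injective {X : Ω → σ → 𝕜}
    (hX : AvoidsPolynomialZeroSets X μ) {e : τ → σ} (he : Function.Injective e) :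
    AvoidsPolynomialZeroSets (fun ω => X ω ∘ e) μ := fun p hp => by
  simpa only [MvPolynomial.eval_rename] using
    hX _ ((map_ne_zero_iff _ (MvPolynomial.rename_injective e he)).mpr hp)

theorem AvoidsPolynomialZeroSets.sumElim [Fintype σ] [Fintype τ] [IsFiniteMeasure μ]
    {X : Ω → σ → 𝕜} {Y : Ω → τ → 𝕜} (hXm : Measurable X) (hYm : Measurable Y)
    (hXY : IndepFun X Y μ) (hX : AvoidsPolynomialZeroSets X μ)
    (hY : AvoidsPolynomialZeroSets Y μ) :
    AvoidsPolynomialZeroSets (fun ω => Sum.elim (X ω) (Y ω)) μ := by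
  intro p hp
  set q := MvPolynomial.sumRingEquiv 𝕜 σ τ p
  obtain ⟨d, hd⟩ : ∃ d, q.coeff d ≠ 0 := MvPolynomial.ne_zero_iff.mp
    ((map_ne_zero_iff _ (MvPolynomial.sumRingEquiv 𝕜 σ τ).injective).mpr hp)
  let S : Set ((σ → 𝕜) × (τ → 𝕜)) := {ab | MvPolynomial.eval (Sum.elim ab.1 ab.2) p = 0}
  have hS : MeasurableSet S := by
    refine (MvPolynomial.measurableSet_eval_eq_zero p).preimage (measurable_pi_lambda _ ?_)
    rintro (s | t)
    exacts [(measurable_pi_apply s).comp measurable_fst,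
      (measurable_pi_apply t).comp measurable_snd]
  -- Off the null set where the coefficient `q.coeff d` vanishes, the slices of `S` are zero sets
  -- of nonzero polynomials.
  have hslice : ∀ᵐ b ∂(μ.map Y), μ.map X ((fun a => (a, b)) ⁻¹' S) = 0 := by
    have hb : ∀ᵐ b ∂(μ.map Y), MvPolynomial.eval b (q.coeff d) ≠ 0 :=
      (ae_map_iff hYm.aemeasurable (MvPolynomial.measurableSet_eval_eq_zero _).compl).mpr
        (measure_eq_zero_iff_ae_notMem.mp (hY _ hd))
    filter_upwards [hb] with b hb
    have hqb : MvPolynomial.map (MvPolynomial.eval b) q ≠ 0 := fun h =>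
      hb (by rw [← MvPolynomial.coeff_map, h, MvPolynomial.coeff_zero])
    rw [Measure.map_apply hXm (hS.preimage measurable_prodMk_right)]
    simpa [S, MvPolynomial.eval_sumElim] using hX _ hqb
  calc μ {ω | MvPolynomial.eval (Sum.elim (X ω) (Y ω)) p = 0}
      = μ.map (fun ω => (X ω, Y ω)) S := (Measure.map_apply (hXm.prodMk hYm) hS).symm
    _ = ((μ.map X).prod (μ.map Y)) S := by
      rw [(indepFun_iff_map_prod_eq_prod_map_map hXm.aemeasurable hYm.aemeasurable).mp hXY]
    _ = ∫⁻ b, μ.map X ((fun a => (a, b)) ⁻¹' S) ∂(μ.map Y) := Measure.prod_apply_symm hS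
    _ = 0 := by rw [lintegral_congr_ae hslice, lintegral_zero]

theorem iIndepFun.indepFun_zero_tail {β : Type*} [MeasurableSpace β] {K : ℕ}
    {X : Fin (K + 1) → Ω → β} (hm : ∀ i, Measurable (X i)) (h : iIndepFun X μ) :
    IndepFun (X 0) (fun ω i => X (Fin.succ i) ω) μ := by
  have h0 := h.indepFun_finset {0} {0}ᶜ disjoint_compl_right hm
  exact h0.comp (_mγ := ‹MeasurableSpace β›) (φ := fun t => t ⟨0, Finset.mem_singleton_self 0⟩)
    (ψ := fun t (i : Fin K) => t ⟨i.succ, by simp⟩) (measurable_pi_apply _)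
    (measurable_pi_lambda _ fun _ => measurable_pi_apply _)

theorem iIndepFun.avoidsPolynomialZeroSets_uncurry [Fintype σ] [IsFiniteMeasure μ] :
    ∀ {K : ℕ} {X : Fin K → Ω → σ → 𝕜}, (∀ i, Measurable (X i)) → iIndepFun X μ →
      (∀ i, AvoidsPolynomialZeroSets (X i) μ) →
      AvoidsPolynomialZeroSets (fun ω (v : Fin K × σ) => X v.1 ω v.2) μ
  | 0, X, _, _, _ => fun p hp => by
    obtain ⟨c, rfl⟩ := MvPolynomial.C_surjective (Fin 0 × σ) p
    simp_all
  | K + 1, X, hm, hind, hX => by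
    have htail := iIndepFun.avoidsPolynomialZeroSets_uncurry (X := fun i => X i.succ)
      (fun i => hm i.succ) (iIndepFun.precomp (Fin.succ_injective K) hind) (fun i => hX i.succ)
    have hindep : IndepFun (X 0) (fun ω (v : Fin K × σ) => X v.1.succ ω v.2) μ :=
      (iIndepFun.indepFun_zero_tail hm hind).comp
        (ψ := fun (t : Fin K → σ → 𝕜) (v : Fin K × σ) => t v.1 v.2) measurable_id (by fun_prop)
    have hsplit := (hX 0).sumElim (hm 0) (by fun_prop) hindep htail
    let e : Fin (K + 1) × σ → σ ⊕ (Fin K × σ) := fun v =>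
      Fin.cases (.inl v.2) (fun j => .inr (j, v.2)) v.1
    have he : Function.Injective e := by
      rintro ⟨i, x⟩ ⟨j, y⟩ h
      cases i using Fin.cases <;> cases j using Fin.cases <;> simp_all [e]
    convert hsplit.comp_injective he using 2 with ω
    funext ⟨i, x⟩
    cases i using Fin.cases <;> rfl

end PolynomialGenericity

theorem diagonal_IA_matrix_full_rank_as_general
    (mu KT : ℕ) (n : Fin KT → ℕ)
    (hC : ∑ i, n i ≤ mu)
    (B : (i : Fin KT) → Fin (n i) → Matrix (Fin mu) (Fin mu) ℂ)
    -- every square submatrix of B_i = [B_{i,1}·1, ..., B_{i,n_i}·1] is invertible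
    (hsub : ∀ (i : Fin KT) (d : ℕ) (r : Fin d → Fin mu) (c : Fin d → Fin (n i)),
      Function.Injective r → Function.Injective c →
      (Matrix.of fun a b => B i (c b) (r a) (r a)).det ≠ 0)
    {Ω : Type*} [MeasurableSpace Ω] (μ : Measure Ω) [IsProbabilityMeasure μ]
    (Ξ : Fin KT → Fin mu → Ω → ℂ)
    (hmeas : ∀ i x, Measurable (Ξ i x))
    (hindep : iIndepFun
      (fun (i : Fin KT) (ω : Ω) => fun x : Fin mu => Ξ i x ω) μ)
    -- the law of each vector Ξ_i puts no mass on the zero set of a nonzero polynomial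
    (hpoly : ∀ (i : Fin KT) (p : MvPolynomial (Fin mu) ℂ), p ≠ 0 →
      μ {ω | MvPolynomial.eval (fun x => Ξ i x ω) p = 0} = 0) :
    ∀ᵐ ω ∂μ,
      (Matrix.of fun (x : Fin mu) (q : (i : Fin KT) × Fin (n i)) =>
        B q.1 q.2 x x * Ξ q.1 x ω).rank = ∑ i, n i := by
  have hcard : Fintype.card ((i : Fin KT) × Fin (n i)) = ∑ i, n i := by simp
  obtain ⟨r⟩ : Nonempty (((i : Fin KT) × Fin (n i)) ↪ Fin mu) :=
    Function.Embedding.nonempty_of_card_le (by simpa [hcard] using hC)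
  have hdet := MvPolynomial.det_genericBlockMatrix_submatrix_ne_zero
    (fun q x => B q.1 q.2 x x) r fun i =>
      hsub i (n i) _ id (r.injective.comp sigma_mk_injective) Function.injective_id
  have hgen := iIndepFun.avoidsPolynomialZeroSets_uncurry
    (fun i => measurable_pi_lambda _ (hmeas i)) hindep hpoly
  filter_upwards [measure_eq_zero_iff_ae_notMem.mp (hgen _ hdet)] with ω hω
  rw [← hcard]
  refine Matrix.rank_eq_card_of_det_submatrix_ne_zero r ?_
  simpa [RingHom.map_det, ← Matrix.submatrix_map, MvPolynomial.genericBlockMatrix_map_eval]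
    using hω

theorem diagonal_IA_matrix_full_rank_as
    (mu KT : ℕ) (hmu : 1 ≤ mu) (n : Fin KT → ℕ) (hn : ∀ i, 1 ≤ n i)
    (hC : ∑ i, n i ≤ mu)
    (B : (i : Fin KT) → Fin (n i) → Matrix (Fin mu) (Fin mu) ℂ)
    (hdiag : ∀ i k, (B i k).IsDiag)
    -- every square submatrix of B_i = [B_{i,1}·1, ..., B_{i,n_i}·1] is invertible
    (hsub : ∀ (i : Fin KT) (d : ℕ) (r : Fin d → Fin mu) (c : Fin d → Fin (n i)),
      Function.Injective r → Function.Injective c →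
      (Matrix.of fun a b => B i (c b) (r a) (r a)).det ≠ 0)
    {Ω : Type*} [MeasurableSpace Ω] (μ : Measure Ω) [IsProbabilityMeasure μ]
    (Ξ : Fin KT → Fin mu → Ω → ℂ)
    (hmeas : ∀ i x, Measurable (Ξ i x))
    (hindep : iIndepFun
      (fun (i : Fin KT) (ω : Ω) => fun x : Fin mu => Ξ i x ω) μ)
    -- the law of each vector Ξ_i puts no mass on the zero set of a nonzero polynomial
    (hpoly : ∀ (i : Fin KT) (p : MvPolynomial (Fin mu) ℂ), p ≠ 0 →
      μ {ω | MvPolynomial.eval (fun x => Ξ i x ω) p = 0} = 0) :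
    ∀ᵐ ω ∂μ,
      (Matrix.of fun (x : Fin mu) (q : (i : Fin KT) × Fin (n i)) =>
        B q.1 q.2 x x * Ξ q.1 x ω).rank = ∑ i, n i :=
  diagonal_IA_matrix_full_rank_as_general mu KT n hC B hsub μ Ξ hmeas hindep hpoly
end

section
/- For all integers K ≥ 3 and r with 1 < r < ⌈K/2⌉, the new NDT upper bound is strictly smaller than the grouped-IA bound at integer points: (1 − r/K) · (r(K−2) + (K−1)) / (r(K−1)² + r(K−2)) < (1 − r/K) / SumDoF_Lb(r), where SumDoF_Lb(r) = 2r if K/r ∈ {2,3} and SumDoF_Lb(r) = (K(K−r) − r²)/(2K − 3r) if K/r ≥ 4, whenever r divides K. -/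
/-- The sum-DoF lower bound of the grouped IA scheme of [bi_dof_2022]. -/
noncomputable def SumDoFLb (K r : ℕ) : ℚ :=
  if K = 2 * r ∨ K = 3 * r then (2 * r : ℚ)
  else ((K : ℚ) * ((K : ℚ) - r) - (r : ℚ) ^ 2) / (2 * (K : ℚ) - 3 * (r : ℚ))

theorem new_bound_beats_grouped_IA (K r : ℕ) (hK : 3 ≤ K) (hr1 : 1 < r)
    (hr2 : r < (K + 1) / 2) (hdvd : r ∣ K) :
    (1 - (r : ℚ) / K) * ((r : ℚ) * ((K : ℚ) - 2) + ((K : ℚ) - 1))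
        / ((r : ℚ) * ((K : ℚ) - 1) ^ 2 + (r : ℚ) * ((K : ℚ) - 2))
      < (1 - (r : ℚ) / K) / SumDoFLb K r := by
  -- basic nat facts
  have h2r : 2 * r < K := by omega
  have ha2 : (2 : ℚ) ≤ (r : ℚ) := by exact_mod_cast hr1
  have hb3 : (3 : ℚ) ≤ (K : ℚ) := by exact_mod_cast hK
  have h2ab : 2 * (r : ℚ) < (K : ℚ) := by exact_mod_cast h2r
  set a : ℚ := (r : ℚ) with ha
  set b : ℚ := (K : ℚ) with hb
  have hc : (0 : ℚ) < 1 - a / b := by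
    rw [sub_pos, div_lt_one (by linarith)]; linarith
  have hD1 : (0 : ℚ) < a * (b - 1) ^ 2 + a * (b - 2) := by nlinarith
  have hne2 : K ≠ 2 * r := by omega
  -- reduce to N * S < D1 form
  have key : ∀ S : ℚ, 0 < S → (a * (b - 2) + (b - 1)) * S < a * (b - 1) ^ 2 + a * (b - 2) →
      (1 - a / b) * (a * (b - 2) + (b - 1)) / (a * (b - 1) ^ 2 + a * (b - 2))
        < (1 - a / b) / S := by
    intro S hS h
    rw [div_lt_div_iff₀ hD1 hS]
    have hN : (0 : ℚ) < a * (b - 2) + (b - 1) := by nlinarith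
    calc (1 - a / b) * (a * (b - 2) + (b - 1)) * S
        = (1 - a / b) * ((a * (b - 2) + (b - 1)) * S) := by ring
      _ < (1 - a / b) * (a * (b - 1) ^ 2 + a * (b - 2)) := by
          exact mul_lt_mul_of_pos_left h hc
  unfold SumDoFLb
  rcases eq_or_ne K (3 * r) with h3 | h3
  · rw [if_pos (Or.inr h3)]
    have hb3a : b = 3 * a := by rw [hb, ha, h3]; push_cast; ring
    refine key _ (by positivity) ?_
    rw [hb3a]; push_cast [ha]; nlinarith
  · rw [if_neg (by tauto)]
    -- K ≥ 4r
    have h4r : 4 * r ≤ K := by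
      obtain ⟨m, hm⟩ := hdvd
      subst hm
      have hm4 : 4 ≤ m := by
        rcases Nat.lt_or_ge m 4 with h | h
        · interval_cases m <;> omega
        · exact h
      calc 4 * r = r * 4 := by ring
        _ ≤ r * m := Nat.mul_le_mul_left r hm4
    have h4ab : 4 * a ≤ b := by rw [ha, hb]; exact_mod_cast h4r
    have hQ : (0 : ℚ) < 2 * b - 3 * a := by linarith
    have hP : (0 : ℚ) < b * (b - a) - a ^ 2 := by nlinarith
    rw [← ha, ← hb]
    refine key _ (div_pos hP hQ) ?_
    rw [← mul_div_assoc, div_lt_iff₀ hQ]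
    nlinarith [sq_nonneg (b - 4 * a), sq_nonneg a, sq_nonneg b, mul_pos hQ hP,
      mul_nonneg (mul_nonneg (sub_nonneg.2 h4ab) (by linarith : (0:ℚ) ≤ a)) (by linarith : (0:ℚ) ≤ b),
      sq_nonneg (a*b - 2*a), sq_nonneg (b - a)]
end

section
/- For all integers K ≥ 4 and r with 1 ≤ r < ⌈(K−1)/2⌉, the new scheme's sum-DoF strictly exceeds that of the zero-forcing scheme: (r(K−1)² + r(K−2)) / (r(K−2) + (K−1)) > 2r. -/
theorem new_scheme_beats_zero_forcing (K r : ℕ) (hK : 4 ≤ K) (hr1 : 1 ≤ r)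
    (hr2 : r < K / 2) :
    ((r : ℚ) * ((K : ℚ) - 1) ^ 2 + (r : ℚ) * ((K : ℚ) - 2))
        / ((r : ℚ) * ((K : ℚ) - 2) + ((K : ℚ) - 1))
      > 2 * (r : ℚ) := by
  have h1 : 2 * r + 2 ≤ K := by omega
  have hKq : (4 : ℚ) ≤ (K : ℚ) := by exact_mod_cast hK
  have hrq : (1 : ℚ) ≤ (r : ℚ) := by exact_mod_cast hr1
  have h1q : 2 * (r : ℚ) + 2 ≤ (K : ℚ) := by exact_mod_cast h1
  have hden : (0 : ℚ) < (r : ℚ) * ((K : ℚ) - 2) + ((K : ℚ) - 1) := by nlinarith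
  rw [gt_iff_lt, lt_div_iff₀ hden]
  nlinarith [sq_nonneg ((K:ℚ) - 2 - 2*r), mul_pos (lt_of_lt_of_le one_pos hrq) hden]
end

section
/- Let c_1 ≥ c_2 ≥ ... ≥ c_K ≥ 0 be a nonincreasing convex sequence of reals (c_{i+1} + c_{i-1} ≥ 2c_i for 2 ≤ i ≤ K−1), let N be a positive integer and r ∈ [1, K] a real number. Then the minimum of Σ_{i=1}^K c_i b_i over nonnegative real vectors (b_1,...,b_K) satisfying Σ b_i = N and Σ i·b_i ≤ rN is attained at the vector with b_{⌊r⌋} = (⌈r⌉ − r)N and b_{⌈r⌉} = (r − ⌊r⌋)N (and b_{⌊r⌋} = N if r is an integer), all other entries zero; its value is N·((⌈r⌉ − r)c_{⌊r⌋} + (r − ⌊r⌋)c_{⌈r⌉}). -/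
private lemma dmono (K : ℕ) (c : ℕ → ℝ)
    (hconv : ∀ i, 2 ≤ i → i + 1 ≤ K → c (i - 1) + c (i + 1) ≥ 2 * c i) :
    ∀ j j', 1 ≤ j → j ≤ j' → j' + 1 ≤ K → c (j+1) - c j ≤ c (j'+1) - c j' := by
  intro j j' hj hjj'
  induction j', hjj' using Nat.le_induction with
  | base => intro _; exact le_refl _
  | succ n hn ih =>
    intro hKn
    have h1 := ih (by omega)
    have h2 := hconv (n+1) (by omega) (by omega)
    have e : (n+1) - 1 = n := by omega
    rw [e] at h2
    linarith

private lemma cmono (K : ℕ) (c : ℕ → ℝ)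
    (hmono : ∀ i, 1 ≤ i → i < K → c (i + 1) ≤ c i) :
    ∀ i j, 1 ≤ i → i ≤ j → j ≤ K → c j ≤ c i := by
  intro i j hi hij
  induction j, hij using Nat.le_induction with
  | base => intro _; exact le_refl _
  | succ n hn ih =>
    intro hKn
    exact le_trans (hmono n (by omega) (by omega)) (ih (by omega))

private lemma lowB (K : ℕ) (c : ℕ → ℝ) (m : ℕ) (hm : 1 ≤ m)
    (hconv : ∀ i, 2 ≤ i → i + 1 ≤ K → c (i - 1) + c (i + 1) ≥ 2 * c i) :
    ∀ k : ℕ, m + k ≤ K → c m + (k : ℝ) * (c (m+1) - c m) ≤ c (m + k) := by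
  intro k
  induction k with
  | zero => intro _; simp
  | succ n ih =>
    intro hKn
    have h1 := ih (by omega)
    have h2 := dmono K c hconv m (m+n) hm (by omega) (by omega)
    have e : m + (n+1) = (m+n)+1 := by omega
    rw [e]
    push_cast
    linarith

private lemma lowC (K : ℕ) (c : ℕ → ℝ) (m : ℕ) (hm1 : 1 ≤ m) (hmK : m + 1 ≤ K)
    (hconv : ∀ i, 2 ≤ i → i + 1 ≤ K → c (i - 1) + c (i + 1) ≥ 2 * c i) :
    ∀ k : ℕ, k < m → c m ≤ c (m - k) + (k : ℝ) * (c (m+1) - c m) := by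
  intro k
  induction k with
  | zero => intro _; simp
  | succ n ih =>
    intro hk
    have h1 := ih (by omega)
    have h2 := dmono K c hconv (m - n - 1) m (by omega) (by omega) hmK
    have e : (m - n - 1) + 1 = m - n := by omega
    rw [e] at h2
    have e2 : m - (n+1) = m - n - 1 := by omega
    rw [e2]
    push_cast
    linarith

theorem convex_nonincreasing_linear_program_min
    (K N : ℕ) (hK : 1 ≤ K) (hN : 0 < N) (r : ℝ) (hr1 : 1 ≤ r) (hr2 : r ≤ K)
    (c : ℕ → ℝ)
    (hmono : ∀ i, 1 ≤ i → i < K → c (i + 1) ≤ c i)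
    (hconv : ∀ i, 2 ≤ i → i + 1 ≤ K → c (i - 1) + c (i + 1) ≥ 2 * c i)
    (hnonneg : ∀ i ∈ Finset.Icc 1 K, 0 ≤ c i) :
    -- the optimal value is N·((⌈r⌉ − r)·c_{⌊r⌋} + (r − ⌊r⌋)·c_{⌈r⌉}),
    -- where for integer r the mass (1 − (r − ⌊r⌋)) = 1 sits entirely on ⌊r⌋
    IsLeast {x : ℝ | ∃ b : ℕ → ℝ,
        (∀ i, 0 ≤ b i) ∧
        (∑ i ∈ Finset.Icc 1 K, b i = N) ∧
        (∑ i ∈ Finset.Icc 1 K, (i : ℝ) * b i ≤ r * N) ∧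
        x = ∑ i ∈ Finset.Icc 1 K, c i * b i}
      ((N : ℝ) * ((1 - (r - (Nat.floor r : ℝ))) * c (Nat.floor r)
        + (r - (Nat.floor r : ℝ)) * c (Nat.ceil r))) := by
  have hr0 : (0:ℝ) ≤ r := le_trans zero_le_one hr1
  set m := Nat.floor r with hmdef
  have hm1 : 1 ≤ m := Nat.le_floor (by exact_mod_cast hr1)
  have hmr : (m : ℝ) ≤ r := Nat.floor_le hr0
  have hrm1 : r < (m : ℝ) + 1 := Nat.lt_floor_add_one r
  have hmK : m ≤ K := by
    have : (m : ℝ) ≤ (K : ℝ) := le_trans hmr hr2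
    exact_mod_cast this
  have hceilK : Nat.ceil r ≤ K := Nat.ceil_le.mpr (by exact_mod_cast hr2)
  have hceilm : m ≤ Nat.ceil r := Nat.floor_le_ceil r
  have hceilm1 : Nat.ceil r ≤ m + 1 := Nat.ceil_le_floor_add_one r
  have hc : Nat.ceil r = m ∨ Nat.ceil r = m + 1 := by omega
  have hrceil : r ≤ (Nat.ceil r : ℝ) := Nat.le_ceil r
  set θ := r - (m : ℝ) with hθdef
  have hθ0 : 0 ≤ θ := by simp [hθdef]; linarith
  have hθ1 : θ ≤ 1 := by simp [hθdef]; linarith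
  have hmmem : m ∈ Finset.Icc 1 K := Finset.mem_Icc.mpr ⟨hm1, hmK⟩
  have hcmem : Nat.ceil r ∈ Finset.Icc 1 K := Finset.mem_Icc.mpr ⟨by omega, hceilK⟩
  constructor
  · -- membership
    refine ⟨fun i => (if i = m then (1-θ)*(N:ℝ) else 0)
        + (if i = Nat.ceil r then θ*(N:ℝ) else 0), fun i => ?_, ?_, ?_, ?_⟩
    · apply add_nonneg
      · split_ifs
        · exact mul_nonneg (by linarith) (Nat.cast_nonneg N)
        · exact le_refl 0
      · split_ifs
        · exact mul_nonneg hθ0 (Nat.cast_nonneg N)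
        · exact le_refl 0
    · rw [Finset.sum_add_distrib, Finset.sum_ite_eq' (Finset.Icc 1 K) m,
        Finset.sum_ite_eq' (Finset.Icc 1 K) (Nat.ceil r), if_pos hmmem, if_pos hcmem]
      ring
    · have hre : ∀ i ∈ Finset.Icc 1 K,
          (i:ℝ) * ((if i = m then (1-θ)*(N:ℝ) else 0) + (if i = Nat.ceil r then θ*(N:ℝ) else 0))
          = (if i = m then (m:ℝ)*((1-θ)*(N:ℝ)) else 0)
            + (if i = Nat.ceil r then (Nat.ceil r : ℝ)*(θ*(N:ℝ)) else 0) := by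
        intro i _
        split_ifs with h1 h2 h2 <;> first
        | (rw [← h1, ← h2]; ring)
        | (rw [← h1]; ring)
        | (rw [← h2]; ring)
        | ring
      rw [Finset.sum_congr rfl hre, Finset.sum_add_distrib,
        Finset.sum_ite_eq' (Finset.Icc 1 K) m, Finset.sum_ite_eq' (Finset.Icc 1 K) (Nat.ceil r),
        if_pos hmmem, if_pos hcmem]
      have hr' : r = (m : ℝ) + θ := by simp [hθdef]
      rcases hc with h | h
      · have hrm : r = (m : ℝ) := le_antisymm (by rw [← h]; exact hrceil) hmr
        have hθz : θ = 0 := by simp [hθdef, hrm]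
        rw [h, hθz, hrm]
        apply le_of_eq; ring
      · rw [h, hr']
        push_cast
        apply le_of_eq; ring
    · have hre : ∀ i ∈ Finset.Icc 1 K,
          c i * ((if i = m then (1-θ)*(N:ℝ) else 0) + (if i = Nat.ceil r then θ*(N:ℝ) else 0))
          = (if i = m then c m * ((1-θ)*(N:ℝ)) else 0)
            + (if i = Nat.ceil r then c (Nat.ceil r) * (θ*(N:ℝ)) else 0) := by
        intro i _
        split_ifs with h1 h2 h2 <;> first
        | (rw [← h1, ← h2]; ring)
        | (rw [← h1]; ring)
        | (rw [← h2]; ring)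
        | ring
      rw [Finset.sum_congr rfl hre, Finset.sum_add_distrib,
        Finset.sum_ite_eq' (Finset.Icc 1 K) m, Finset.sum_ite_eq' (Finset.Icc 1 K) (Nat.ceil r),
        if_pos hmmem, if_pos hcmem]
      ring
  · -- lower bound
    rintro x ⟨b, hb0, hbsum, hbi, rfl⟩
    by_cases hK' : m + 1 ≤ K
    · set s := c (m+1) - c m with hsdef
      have hs : s ≤ 0 := by
        have := hmono m hm1 (by omega)
        rw [hsdef]; linarith
      have hmin : ∀ i ∈ Finset.Icc 1 K, c m + ((i:ℝ) - (m:ℝ)) * s ≤ c i := by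
        intro i hi
        rw [Finset.mem_Icc] at hi
        rcases le_or_gt m i with h | h
        · have hB := lowB K c m hm1 hconv (i - m) (by omega)
          have e : m + (i - m) = i := by omega
          rw [e] at hB
          have e2 : ((i - m : ℕ) : ℝ) = (i:ℝ) - (m:ℝ) := by
            push_cast [h]; ring
          rw [e2] at hB
          rw [hsdef]; linarith
        · have hC := lowC K c m hm1 hK' hconv (m - i) (by omega)
          have e : m - (m - i) = i := by omega
          rw [e] at hC
          have e2 : ((m - i : ℕ) : ℝ) = (m:ℝ) - (i:ℝ) := by
            push_cast [le_of_lt h]; ring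
          rw [e2] at hC
          rw [hsdef]; linarith
      have key : ∀ i ∈ Finset.Icc 1 K,
          (c m + ((i:ℝ) - (m:ℝ)) * s) * b i ≤ c i * b i :=
        fun i hi => mul_le_mul_of_nonneg_right (hmin i hi) (hb0 i)
      have hsum1 : ∑ i ∈ Finset.Icc 1 K, (c m + ((i:ℝ) - (m:ℝ)) * s) * b i
          ≤ ∑ i ∈ Finset.Icc 1 K, c i * b i := Finset.sum_le_sum key
      have expand : ∑ i ∈ Finset.Icc 1 K, (c m + ((i:ℝ) - (m:ℝ)) * s) * b i
          = c m * (N:ℝ) + s * (∑ i ∈ Finset.Icc 1 K, (i:ℝ) * b i) - s * (m:ℝ) * (N:ℝ) := by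
        have hre : ∀ i ∈ Finset.Icc 1 K, (c m + ((i:ℝ) - (m:ℝ)) * s) * b i
            = c m * b i + s * ((i:ℝ) * b i) - s * (m:ℝ) * b i := fun i _ => by ring
        rw [Finset.sum_congr rfl hre, Finset.sum_sub_distrib, Finset.sum_add_distrib,
          ← Finset.mul_sum, ← Finset.mul_sum, ← Finset.mul_sum, hbsum]
      have hS : s * (r * (N:ℝ)) ≤ s * (∑ i ∈ Finset.Icc 1 K, (i:ℝ) * b i) :=
        mul_le_mul_of_nonpos_left hbi hs
      have htarget : (N:ℝ) * ((1 - θ) * c m + θ * c (Nat.ceil r))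
          = c m * (N:ℝ) + s * (r * (N:ℝ)) - s * (m:ℝ) * (N:ℝ) := by
        rcases hc with h | h
        · have hrm : r = (m : ℝ) := le_antisymm (by rw [← h]; exact hrceil) hmr
          have hθz : θ = 0 := by simp [hθdef, hrm]
          rw [h, hθz, hrm, hsdef]; ring
        · have hr' : r = (m : ℝ) + θ := by simp [hθdef]
          rw [h, hr', hsdef]; ring
      linarith
    · have hmK' : m = K := by omega
      have hrm : r = (K : ℝ) := le_antisymm hr2 (by rw [← hmK']; exact hmr)
      have hkey : ∀ i ∈ Finset.Icc 1 K, c K * b i ≤ c i * b i := by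
        intro i hi
        rw [Finset.mem_Icc] at hi
        exact mul_le_mul_of_nonneg_right (cmono K c hmono i K hi.1 hi.2 le_rfl) (hb0 i)
      have h1 : c K * (N:ℝ) ≤ ∑ i ∈ Finset.Icc 1 K, c i * b i := by
        rw [← hbsum, Finset.mul_sum]
        exact Finset.sum_le_sum hkey
      have hceq : Nat.ceil r = K := by omega
      have hθz : θ = 0 := by
        simp [hθdef, hrm, hmK']
      rw [hθz, hceq, hmK']
      calc (N:ℝ) * ((1 - 0) * c K + 0 * c K) = c K * (N:ℝ) := by ring
        _ ≤ _ := h1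
end
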